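/- Let E/F be a quadratic extension of fields of characteristic zero and σ the nontrivial F-automorphism of E, acting entrywise on vectors and matrices over E. Let n ≥ 0, W = E^{n+1} with last standard basis vector e₀ and e₀* the last coordinate form. Identify GL_n over either field with the subgroup of GL_{n+1} of block-diagonal elements diag(g,1). Let Y, Y' ∈ GL_{n+1}(E) satisfy Y·σ(Y) = 1 and Y'·σ(Y') = 1. Assume det((e₀*(Y^{i+j} e₀))_{0 ≤ i,j ≤ n}) ≠ 0, that Y and Y' have the same characteristic polynomial, and that e₀*(Y^i e₀) = e₀*(Y'^i e₀) for all 0 ≤ i ≤ n. Then there exists a unique g ∈ GL_n(F) such that Y' = g Y g⁻¹. (In other words, the elements of {g ∈ GL_{n+1}(E) : g·σ(g) = 1} with given regular semisimple invariants form a single GL_n(F)-conjugacy orbit.) -/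

import Mathlib

/-!
Let `K = [e₀, Y e₀, …, Yⁿ e₀]` be the Krylov matrix of `Y`. The Hankel matrix `(e₀* Y^{i+j} e₀)`
is the product of the matrix with rows `e₀* Yⁱ` and `K`, so `K` is invertible. By Cayley–Hamilton
the invariants `e₀* Yᵏ e₀` agree for all `k`, so the same holds for the Krylov matrix `K'` of `Y'`.
As `Y K = K C` and `Y' K' = K' C` for the companion matrix `C` of the common characteristic
polynomial, `T = K' K⁻¹` conjugates `Y` into `Y'` and fixes `e₀`, and it is the only matrix doing
both (any such `D` has `D K = K'`). Since `σ(Y) = Y⁻¹` and `σ(Y') = Y'⁻¹`, `σ(T)` does both as well,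
so `σ(T) = T` has entries in `F`. Finally `e₀* K' = e₀* K` gives `e₀* T = e₀*`, so `T = diag(g, 1)`
with `g ∈ GL_n(F)`.
-/

open Polynomial Module IntermediateField

namespace Matrix

section Krylov

variable {R : Type*} [CommRing R] {n : ℕ}

theorem pow_apply_eq_pow_apply_of_charpoly_eq [Nontrivial R] {ι : Type*} [Fintype ι]
    [DecidableEq ι] {Y Y' : Matrix ι ι R} (hchar : Y.charpoly = Y'.charpoly) {a b : ι}
    (h : ∀ i < Fintype.card ι, (Y ^ i) a b = (Y' ^ i) a b) (k : ℕ) :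
    (Y ^ k) a b = (Y' ^ k) a b := by
  have hne : Y.charpoly ≠ 1 := fun h1 => by
    simpa [h1] using (Fintype.card_pos_iff.2 ⟨a⟩).trans_eq Y.charpoly_natDegree_eq_dim.symm
  have hdeg : (X ^ k %ₘ Y.charpoly).natDegree < Fintype.card ι :=
    Y.charpoly_natDegree_eq_dim ▸ natDegree_modByMonic_lt _ Y.charpoly_monic hne
  rw [pow_eq_aeval_mod_charpoly, pow_eq_aeval_mod_charpoly Y', ← hchar,
    aeval_eq_sum_range' hdeg, aeval_eq_sum_range' hdeg, sum_apply, sum_apply]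
  exact Finset.sum_congr rfl fun i hi => by
    rw [smul_apply, smul_apply, h i (Finset.mem_range.1 hi)]

def krylov (Y : Matrix (Fin (n + 1)) (Fin (n + 1)) R) (v : Fin (n + 1) → R) :
    Matrix (Fin (n + 1)) (Fin (n + 1)) R :=
  of fun k j => (Y ^ (j : ℕ) *ᵥ v) k

def companion (p : R[X]) (n : ℕ) : Matrix (Fin (n + 1)) (Fin (n + 1)) R :=
  of fun i j => if (j : ℕ) = n then -p.coeff i else if (i : ℕ) = j + 1 then 1 else 0

variable {Y Y' D : Matrix (Fin (n + 1)) (Fin (n + 1)) R} {v w : Fin (n + 1) → R}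

theorem mul_krylov_apply (A : Matrix (Fin (n + 1)) (Fin (n + 1)) R) (k j : Fin (n + 1)) :
    (A * krylov Y v) k j = ((A * Y ^ (j : ℕ)) *ᵥ v) k := by
  rw [← mulVec_mulVec]; rfl

theorem krylov_mulVec_single_zero : krylov Y v *ᵥ Pi.single 0 1 = v := by
  ext k; simp [krylov]

theorem transpose_krylov_transpose_mul_krylov :
    (krylov Yᵀ w)ᵀ * krylov Y v = of fun i j : Fin (n + 1) => w ⬝ᵥ (Y ^ ((i : ℕ) + j) *ᵥ v) := by
  ext i j
  rw [mul_krylov_apply, ← mulVec_mulVec, of_apply, pow_add, ← mulVec_mulVec, dotProduct_mulVec]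
  change (fun k => krylov Yᵀ w k i) ⬝ᵥ _ = _
  congr 1
  ext k
  simp [krylov, ← transpose_pow, mulVec_transpose]

theorem det_krylov_ne_zero
    (h : (of fun i j : Fin (n + 1) => w ⬝ᵥ (Y ^ ((i : ℕ) + j) *ᵥ v)).det ≠ 0) :
    (krylov Y v).det ≠ 0 :=
  right_ne_zero_of_mul (by rwa [← det_mul, transpose_krylov_transpose_mul_krylov])

theorem det_krylov_single_one_ne_zero {a : Fin (n + 1)}
    (h : (of fun i j : Fin (n + 1) => (Y ^ ((i : ℕ) + j)) a a).det ≠ 0) :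
    (krylov Y (Pi.single a 1)).det ≠ 0 :=
  det_krylov_ne_zero (w := Pi.single a 1) (by simpa [mulVec_single_one] using h)

theorem single_one_vecMul_krylov_single_one (a b : Fin (n + 1)) :
    Pi.single a 1 ᵥ* krylov Y (Pi.single b 1) = fun j : Fin (n + 1) => (Y ^ (j : ℕ)) a b := by
  ext j
  simp [krylov]

theorem mul_krylov_of_mul_eq_mul (hDY : D * Y = Y' * D) (hv : D *ᵥ v = v) :
    D * krylov Y v = krylov Y' v := by
  ext k j
  rw [mul_krylov_apply, (SemiconjBy.pow_right hDY j).eq, ← mulVec_mulVec, hv]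
  rfl

theorem pow_succ_eq_neg_sum_coeff_charpoly [Nontrivial R] :
    Y ^ (n + 1) = -∑ i : Fin (n + 1), Y.charpoly.coeff i • Y ^ (i : ℕ) := by
  have hdeg : Y.charpoly.natDegree = n + 1 := by simp [charpoly_natDegree_eq_dim]
  have hlead := Y.charpoly_monic.coeff_natDegree
  rw [hdeg] at hlead
  have h := Y.aeval_self_charpoly
  rw [aeval_eq_sum_range, hdeg, Finset.sum_range_succ, hlead, one_smul,
    ← Fin.sum_univ_eq_sum_range (fun i => Y.charpoly.coeff i • Y ^ i)] at h
  exact eq_neg_of_add_eq_zero_right h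

theorem mul_companion_apply_castSucc (A : Matrix (Fin (n + 1)) (Fin (n + 1)) R) (p : R[X])
    (k : Fin (n + 1)) (j : Fin n) : (A * companion p n) k j.castSucc = A k j.succ := by
  rw [mul_apply, Finset.sum_eq_single j.succ]
  · simp [companion, j.isLt.ne]
  · intro m _ hm
    have : (m : ℕ) ≠ j + 1 := fun h => hm (Fin.ext h)
    simp [companion, j.isLt.ne, this]
  · simp

theorem mul_companion_apply_last (A : Matrix (Fin (n + 1)) (Fin (n + 1)) R) (p : R[X])
    (k : Fin (n + 1)) :
    (A * companion p n) k (Fin.last n) = -∑ m : Fin (n + 1), A k m * p.coeff m := by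
  simp [mul_apply, companion]

theorem mul_krylov_eq_krylov_mul_companion [Nontrivial R] :
    Y * krylov Y v = krylov Y v * companion Y.charpoly n := by
  ext k j
  rw [mul_krylov_apply, ← pow_succ']
  induction j using Fin.lastCases with
  | last =>
    simp [mul_companion_apply_last, pow_succ_eq_neg_sum_coeff_charpoly, krylov, neg_mulVec,
      sum_mulVec, smul_mulVec, mul_comm]
  | cast j =>
    rw [mul_companion_apply_castSucc]
    rfl

end Krylov

section Transporter

variable {K : Type*} [Field K] {n : ℕ} {Y Y' D : Matrix (Fin (n + 1)) (Fin (n + 1)) K}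
  {v w : Fin (n + 1) → K}

theorem eq_krylov_mul_inv_of_mul_eq_mul (hK : (krylov Y v).det ≠ 0) (hDY : D * Y = Y' * D)
    (hv : D *ᵥ v = v) : D = krylov Y' v * (krylov Y v)⁻¹ := by
  rw [← mul_krylov_of_mul_eq_mul hDY hv, mul_assoc, mul_nonsing_inv _ hK.isUnit, mul_one]

theorem krylov_mul_inv_mul_eq_mul (hchar : Y.charpoly = Y'.charpoly) (hK : (krylov Y v).det ≠ 0) :
    krylov Y' v * (krylov Y v)⁻¹ * Y = Y' * (krylov Y' v * (krylov Y v)⁻¹) := by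
  have hinv : (krylov Y v)⁻¹ * Y = companion Y.charpoly n * (krylov Y v)⁻¹ := by
    have hKu := hK.isUnit
    calc (krylov Y v)⁻¹ * Y = (krylov Y v)⁻¹ * (Y * krylov Y v) * (krylov Y v)⁻¹ := by
          rw [mul_assoc, mul_assoc, mul_nonsing_inv _ hKu, mul_one]
      _ = companion Y.charpoly n * (krylov Y v)⁻¹ := by
          rw [mul_krylov_eq_krylov_mul_companion, ← mul_assoc, nonsing_inv_mul _ hKu, one_mul]
  rw [mul_assoc, hinv, ← mul_assoc, ← mul_assoc, hchar, ← mul_krylov_eq_krylov_mul_companion]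

theorem krylov_mul_inv_mulVec (hK : (krylov Y v).det ≠ 0) :
    (krylov Y' v * (krylov Y v)⁻¹) *ᵥ v = v := by
  have : (krylov Y v)⁻¹ *ᵥ v = Pi.single 0 1 := by
    calc (krylov Y v)⁻¹ *ᵥ v = (krylov Y v)⁻¹ *ᵥ (krylov Y v *ᵥ Pi.single 0 1) := by
          rw [krylov_mulVec_single_zero]
      _ = Pi.single 0 1 := by rw [mulVec_mulVec, nonsing_inv_mul _ hK.isUnit, one_mulVec]
  rw [← mulVec_mulVec, this, krylov_mulVec_single_zero]

theorem vecMul_krylov_mul_inv (hK : (krylov Y v).det ≠ 0)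
    (hw : w ᵥ* krylov Y' v = w ᵥ* krylov Y v) : w ᵥ* (krylov Y' v * (krylov Y v)⁻¹) = w := by
  rw [← vecMul_vecMul, hw, vecMul_vecMul, mul_nonsing_inv _ hK.isUnit, vecMul_one]

end Transporter

theorem map_mul_eq_mul_map_of_mul_eq_mul {R : Type*} [CommRing R] {ι : Type*} [Fintype ι]
    [DecidableEq ι] (f : R →+* R) {Y Y' D : Matrix ι ι R} (hY : Y * Y.map f = 1)
    (hY' : Y' * Y'.map f = 1) (hDY : D * Y = Y' * D) : D.map f * Y = Y' * D.map f := by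
  have hmap : D.map f * Y.map f = Y'.map f * D.map f := by
    simpa only [Matrix.map_mul] using congrArg (·.map f) hDY
  calc D.map f * Y = Y' * (Y'.map f * D.map f) * Y := by rw [← mul_assoc, hY', one_mul]
    _ = Y' * D.map f * (Y.map f * Y) := by rw [← hmap]; simp only [mul_assoc]
    _ = Y' * D.map f := by rw [mul_eq_one_comm.1 hY, mul_one]

theorem map_mulVec_single_one {R S ι : Type*} [NonAssocSemiring R] [NonAssocSemiring S]
    [Fintype ι] [DecidableEq ι] (f : R →+* S) {D : Matrix ι ι R} {j : ι}
    (h : D *ᵥ Pi.single j 1 = Pi.single j 1) : D.map f *ᵥ Pi.single j 1 = Pi.single j 1 := by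
  ext k
  have hk := congrFun h k
  simp only [mulVec_single_one, col_apply, map_apply] at hk ⊢
  rw [hk]
  rcases eq_or_ne k j with rfl | hkj <;> simp [*]

section BlockDiagOne

variable {R : Type*} {n : ℕ}

def blockDiagOne [Semiring R] :
    Matrix (Fin n) (Fin n) R →* Matrix (Fin (n + 1)) (Fin (n + 1)) R where
  toFun A := reindex finSumFinEquiv finSumFinEquiv (fromBlocks A 0 0 1)
  map_one' := by rw [fromBlocks_one, reindex_apply, submatrix_one_equiv]
  map_mul' A B := by
    rw [reindex_apply, reindex_apply, reindex_apply, submatrix_mul_equiv, fromBlocks_multiply]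
    simp

section Semiring

variable [Semiring R] (A : Matrix (Fin n) (Fin n) R)

@[simp]
theorem blockDiagOne_apply_castSucc_castSucc (i j : Fin n) :
    blockDiagOne A i.castSucc j.castSucc = A i j := by
  simp [blockDiagOne]

@[simp]
theorem blockDiagOne_apply_castSucc_last (i : Fin n) :
    blockDiagOne A i.castSucc (Fin.last n) = 0 := by
  simp [blockDiagOne]

@[simp]
theorem blockDiagOne_apply_last_castSucc (j : Fin n) :
    blockDiagOne A (Fin.last n) j.castSucc = 0 := by
  simp [blockDiagOne]

@[simp]
theorem blockDiagOne_apply_last_last : blockDiagOne A (Fin.last n) (Fin.last n) = 1 := by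
  simp [blockDiagOne]

theorem blockDiagOne_injective : Function.Injective (blockDiagOne (R := R) (n := n)) :=
  fun A B h => by ext i j; simpa using congrFun₂ h i.castSucc j.castSucc

theorem blockDiagOne_mulVec_single_last :
    blockDiagOne A *ᵥ Pi.single (Fin.last n) 1 = Pi.single (Fin.last n) 1 := by
  ext k
  induction k using Fin.lastCases <;> simp

theorem eq_blockDiagOne_submatrix {D : Matrix (Fin (n + 1)) (Fin (n + 1)) R}
    (hcol : D *ᵥ Pi.single (Fin.last n) 1 = Pi.single (Fin.last n) 1)
    (hrow : Pi.single (Fin.last n) 1 ᵥ* D = Pi.single (Fin.last n) 1) :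
    D = blockDiagOne (D.submatrix Fin.castSucc Fin.castSucc) := by
  have hc (k : Fin (n + 1)) := congrFun hcol k
  have hr (k : Fin (n + 1)) := congrFun hrow k
  rw [mulVec_single_one] at hc
  rw [single_one_vecMul] at hr
  ext i j
  induction i using Fin.lastCases <;> induction j using Fin.lastCases
  all_goals simp_all [Fin.castSucc_ne_last]

end Semiring

theorem det_blockDiagOne [CommRing R] (A : Matrix (Fin n) (Fin n) R) :
    (blockDiagOne A).det = A.det := by
  simp [blockDiagOne]

end BlockDiagOne

end Matrix

open Matrix

theorem MonoidHom.eq_mul_mul_map_inv_iff {M N : Type*} [Monoid M] [Monoid N] (φ : M →* N)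
    (g : Mˣ) (y y' : N) : y' = φ g * y * φ ↑g⁻¹ ↔ φ g * y = y' * φ g :=
  (Units.eq_mul_inv_iff_mul_eq (c := Units.map φ g)).trans eq_comm

section QuadraticExtension

variable {F E : Type*} [Field F] [Field E] [Algebra F E]

theorem mem_range_algebraMap_of_apply_eq_self (hquad : finrank F E = 2) {σ : E ≃ₐ[F] E}
    (hσ : σ ≠ AlgEquiv.refl) {x : E} (hx : σ x = x) : x ∈ Set.range (algebraMap F E) := by
  have : FiniteDimensional F E := Module.finite_of_finrank_eq_succ hquad
  by_contra hxF
  have hbot : F⟮x⟯ ≠ ⊥ := by rwa [Ne, adjoin_simple_eq_bot_iff, mem_bot]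
  have htop : F⟮x⟯ = ⊤ := by
    have hdvd : finrank F F⟮x⟯ ∣ 2 :=
      hquad ▸ finrank_top' (F := F) (E := E) ▸ finrank_dvd_of_le_right le_top
    rcases (Nat.dvd_prime Nat.prime_two).1 hdvd with h | h
    · exact absurd (finrank_eq_one_iff.1 h) hbot
    · exact eq_of_le_of_finrank_eq le_top (by rw [h, finrank_top', hquad])
  refine hσ (AlgEquiv.coe_toAlgHom_injective (AlgHom.ext_of_adjoin_eq_top (s := {x}) ?_ ?_))
  · rw [← adjoin_simple_toSubalgebra_of_isAlgebraic (Algebra.IsAlgebraic.isAlgebraic x), htop,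
      top_toSubalgebra]
  · simpa using hx

theorem exists_unit_blockDiagOne_map_eq (hquad : finrank F E = 2) {σ : E ≃ₐ[F] E}
    (hσ : σ ≠ AlgEquiv.refl) {n : ℕ} {T : Matrix (Fin (n + 1)) (Fin (n + 1)) E}
    (hT : T.map σ = T) (hcol : T *ᵥ Pi.single (Fin.last n) 1 = Pi.single (Fin.last n) 1)
    (hrow : Pi.single (Fin.last n) 1 ᵥ* T = Pi.single (Fin.last n) 1) (hdet : T.det ≠ 0) :
    ∃ g : (Matrix (Fin n) (Fin n) F)ˣ,
      blockDiagOne ((g : Matrix (Fin n) (Fin n) F).map (algebraMap F E)) = T := by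
  choose B hB using fun i j =>
    Set.mem_range.1 (mem_range_algebraMap_of_apply_eq_self hquad hσ (congrFun₂ hT i j))
  set g := (of B).submatrix Fin.castSucc Fin.castSucc
  have hgT : blockDiagOne (g.map (algebraMap F E)) = T := by
    rw [eq_blockDiagOne_submatrix hcol hrow, ← submatrix_map]
    congr 2
    ext i j
    exact hB i j
  have hg : IsUnit g := by
    rw [isUnit_iff_isUnit_det, isUnit_iff_ne_zero]
    intro h0
    apply hdet
    rw [← hgT, det_blockDiagOne, ← RingHom.mapMatrix_apply, ← RingHom.map_det, h0, map_zero]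
  exact ⟨hg.unit, hgT⟩

end QuadraticExtension

theorem stmt_10_general (F E : Type*) [Field F] [Field E] [Algebra F E]
    (hquad : Module.finrank F E = 2)
    (σ : E ≃ₐ[F] E) (hσ : σ ≠ AlgEquiv.refl)
    (n : ℕ) (Y Y' : Matrix (Fin (n + 1)) (Fin (n + 1)) E)
    (hY : Y * Y.map ⇑σ = 1) (hY' : Y' * Y'.map ⇑σ = 1)
    (hreg : (Matrix.of fun i j : Fin (n + 1) =>
        (Y ^ ((i : ℕ) + (j : ℕ))) (Fin.last n) (Fin.last n)).det ≠ 0)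
    (hchar : Y.charpoly = Y'.charpoly)
    (hinvs : ∀ i ≤ n, (Y ^ i) (Fin.last n) (Fin.last n) = (Y' ^ i) (Fin.last n) (Fin.last n)) :
    ∃! g : (Matrix (Fin n) (Fin n) F)ˣ,
      Y' =
        Matrix.reindex finSumFinEquiv finSumFinEquiv
            (Matrix.fromBlocks (((g : Matrix (Fin n) (Fin n) F)).map (algebraMap F E)) 0 0 1) *
          Y *
          Matrix.reindex finSumFinEquiv finSumFinEquiv
            (Matrix.fromBlocks (((↑g⁻¹ : Matrix (Fin n) (Fin n) F)).map (algebraMap F E)) 0 0 1) := by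
  set e₀ : Fin (n + 1) → E := Pi.single (Fin.last n) 1
  have hpow := pow_apply_eq_pow_apply_of_charpoly_eq hchar fun i hi =>
    hinvs i (by simpa [Nat.lt_succ_iff] using hi)
  have hK : (krylov Y e₀).det ≠ 0 := det_krylov_single_one_ne_zero hreg
  have hK' : (krylov Y' e₀).det ≠ 0 :=
    det_krylov_single_one_ne_zero (by simpa only [← hpow] using hreg)
  set T := krylov Y' e₀ * (krylov Y e₀)⁻¹
  have hTY : T * Y = Y' * T := krylov_mul_inv_mul_eq_mul hchar hK
  have hTe : T *ᵥ e₀ = e₀ := krylov_mul_inv_mulVec hK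
  have hTσ : T.map σ = T := eq_krylov_mul_inv_of_mul_eq_mul hK
    (map_mul_eq_mul_map_of_mul_eq_mul (σ : E →+* E) hY hY' hTY)
    (map_mulVec_single_one (σ : E →+* E) hTe)
  have heT : e₀ ᵥ* T = e₀ :=
    vecMul_krylov_mul_inv hK (by simp only [e₀, single_one_vecMul_krylov_single_one, hpow])
  obtain ⟨g, hg⟩ := exists_unit_blockDiagOne_map_eq hquad hσ hTσ hTe heT
    (by simp [T, det_nonsing_inv, hK, hK'])
  let φ : Matrix (Fin n) (Fin n) F →* Matrix (Fin (n + 1)) (Fin (n + 1)) E :=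
    blockDiagOne.comp (algebraMap F E).mapMatrix.toMonoidHom
  change ∃! g : (Matrix (Fin n) (Fin n) F)ˣ, Y' = φ g * Y * φ ↑g⁻¹
  have hconj (u : (Matrix (Fin n) (Fin n) F)ˣ) : Y' = φ u * Y * φ ↑u⁻¹ ↔ φ u = T := by
    rw [φ.eq_mul_mul_map_inv_iff]
    exact ⟨fun h => eq_krylov_mul_inv_of_mul_eq_mul hK h (blockDiagOne_mulVec_single_last _),
      fun h => h ▸ hTY⟩
  refine ⟨g, (hconj g).2 hg, fun u hu => Units.ext ?_⟩
  exact map_injective (algebraMap F E).injective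
    (blockDiagOne_injective (((hconj u).1 hu).trans hg.symm))

/-- Let `E/F` be a quadratic extension with conjugation `σ`, and let
`Y, Y' ∈ GL_{n+1}(E)` satisfy `Y σ(Y) = 1`, `Y' σ(Y') = 1`. If `Y` is regular semisimple
(i.e. `det ((e₀* (Y^{i+j} e₀)))_{0 ≤ i,j ≤ n} ≠ 0` where `e₀` is the last basis vector),
`Y` and `Y'` have the same characteristic polynomial and the same invariants
`e₀* (Y^i e₀)` for `0 ≤ i ≤ n`, then there is a unique `g ∈ GL_n(F)` with
`Y' = diag(g,1) · Y · diag(g,1)⁻¹`. -/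
theorem stmt_10 (F E : Type*) [Field F] [Field E] [CharZero F] [CharZero E] [Algebra F E]
    (hquad : Module.finrank F E = 2)
    (σ : E ≃ₐ[F] E) (hσ : σ ≠ AlgEquiv.refl)
    (n : ℕ) (Y Y' : Matrix (Fin (n + 1)) (Fin (n + 1)) E)
    (hY : Y * Y.map ⇑σ = 1) (hY' : Y' * Y'.map ⇑σ = 1)
    (hreg : (Matrix.of fun i j : Fin (n + 1) =>
        (Y ^ ((i : ℕ) + (j : ℕ))) (Fin.last n) (Fin.last n)).det ≠ 0)
    (hchar : Y.charpoly = Y'.charpoly)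
    (hinvs : ∀ i ≤ n, (Y ^ i) (Fin.last n) (Fin.last n) = (Y' ^ i) (Fin.last n) (Fin.last n)) :
    ∃! g : (Matrix (Fin n) (Fin n) F)ˣ,
      Y' =
        Matrix.reindex finSumFinEquiv finSumFinEquiv
            (Matrix.fromBlocks (((g : Matrix (Fin n) (Fin n) F)).map (algebraMap F E)) 0 0 1) *
          Y *
          Matrix.reindex finSumFinEquiv finSumFinEquiv
            (Matrix.fromBlocks (((↑g⁻¹ : Matrix (Fin n) (Fin n) F)).map (algebraMap F E)) 0 0 1) :=
  stmt_10_general F E hquad σ hσ n Y Y' hY hY' hreg hchar hinvs
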